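/- Let δ > 0 and let M₁, M₂, …, be independent 1-subgaussian real random variables with zero means; set μ̂ₙ = (1/n)·∑_{s=1}^n M_s. Then for any positive integers T₁ ≤ T, ∑_{n=1}^T P(μ̂ₙ + √((4/n)·log⁺(T₁/n)) ≥ δ) ≤ 1 + 4·log⁺(T₁δ²)/δ² + 3/δ² + √(8π·log⁺(T₁δ²))/δ². -/

import Mathlib

/-!
Every summand is at most `1`. Put `L = log⁺(T₁δ²)` and `c = √(4L)`. Once `n δ² ≥ 4L + 1`, the
bonus `√((4/n) log⁺(T₁/n))` is at most `c / √n`, so Hoeffding's inequality bounds the `n`-th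
summand by `exp (-(√n δ - c)² / 2)`. This is decreasing in `n`, so the tail sum is at most
`∫ exp (-(√x δ - c)² / 2) dx`, which the substitution `u = √x δ - c` turns into
`(2/δ²) ∫₀^∞ (u + c) e^{-u²/2} du = (2 + c √(2π)) / δ²`. The remaining `⌈(4L + 1)/δ²⌉`
summands contribute at most `1` each.
-/

open MeasureTheory ProbabilityTheory Real
open scoped ENNReal

/-- `Z` is 1-subgaussian: `E[exp(λZ − λE[Z])] ≤ exp(λ²/2)` for all `λ ∈ ℝ`
(with the integrability of the moment generating function). -/
def IsOneSubgaussian {Ω : Type*} [MeasurableSpace Ω] (μ : Measure Ω) (Z : Ω → ℝ) : Prop :=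
  Integrable Z μ ∧ ∀ l : ℝ,
    Integrable (fun ω => Real.exp (l * Z ω - l * (∫ ω', Z ω' ∂μ))) μ ∧
    (∫ ω, Real.exp (l * Z ω - l * (∫ ω', Z ω' ∂μ)) ∂μ) ≤ Real.exp (l ^ 2 / 2)

/-- `log⁺ x = max {0, log x}`. -/
noncomputable def logPlus (x : ℝ) : ℝ := max 0 (Real.log x)

lemma logPlus_nonneg (x : ℝ) : 0 ≤ logPlus x := le_max_left _ _

lemma logPlus_le_logPlus {x y : ℝ} (hx : 0 ≤ x) (hxy : x ≤ y) : logPlus x ≤ logPlus y := by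
  rcases hx.eq_or_lt with rfl | hx
  · simp [logPlus]
  · exact max_le_max le_rfl (Real.log_le_log hx hxy)

lemma IsOneSubgaussian.hasSubgaussianMGF {Ω : Type*} [MeasurableSpace Ω] {μ : Measure Ω}
    {Z : Ω → ℝ} (h : IsOneSubgaussian μ Z) (hZ : ∫ ω, Z ω ∂μ = 0) :
    HasSubgaussianMGF Z 1 μ where
  integrable_exp_mul t := by simpa [hZ] using (h.2 t).1
  mgf_le t := by simpa [mgf, hZ] using (h.2 t).2

lemma integral_Ioi_mul_exp_neg_mul_sq {b : ℝ} (hb : 0 < b) :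
    ∫ x in Set.Ioi (0 : ℝ), x * exp (-b * x ^ 2) = (2 * b)⁻¹ := by
  rw [← Complex.ofReal_inj, ← integral_complex_ofReal]
  push_cast
  exact integral_mul_cexp_neg_mul_sq (by simpa using hb)

lemma integral_Ioi_add_mul_exp_neg_half_sq (c : ℝ) :
    ∫ u in Set.Ioi (0 : ℝ), (u + c) * exp (-(1 / 2) * u ^ 2) = 1 + c * √(2 * π) / 2 := by
  have hb : (0 : ℝ) < 1 / 2 := by norm_num
  simp_rw [add_mul]
  rw [integral_add (integrable_mul_exp_neg_mul_sq hb).integrableOn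
      ((integrable_exp_neg_mul_sq hb).const_mul c).integrableOn,
    integral_const_mul, integral_Ioi_mul_exp_neg_mul_sq hb, integral_gaussian_Ioi]
  rw [show π / (1 / 2) = 2 * π by ring]
  ring

lemma AntitoneOn.sum_Ioc_le_integral {f : ℝ → ℝ} {a b : ℕ} (hab : a ≤ b)
    (hf : AntitoneOn f (Set.Icc a b)) : ∑ n ∈ Finset.Ioc a b, f n ≤ ∫ x in a..b, f x := by
  have h := hf.sum_le_integral_Ico hab
  rwa [Finset.sum_Ico_add' (fun n : ℕ => f n), Finset.Ico_add_one_add_one_eq_Ioc] at h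

lemma integral_exp_neg_half_sq_sqrt_mul_sub {δ c a b : ℝ} (hδ : δ ≠ 0) (ha : 0 < a)
    (hb : 0 < b) :
    ∫ x in a..b, exp (-(1 / 2) * (√x * δ - c) ^ 2)
      = 2 / δ ^ 2 * ∫ u in (√a * δ - c)..(√b * δ - c), (u + c) * exp (-(1 / 2) * u ^ 2) := by
  have hpos : ∀ x ∈ Set.uIcc a b, 0 < x := fun x hx => (lt_min ha hb).trans_le hx.1
  have hderiv : ∀ x ∈ Set.uIcc a b, HasDerivAt (fun x => √x * δ - c) (δ / (2 * √x)) x :=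
    fun x hx => (((hasDerivAt_sqrt (hpos x hx).ne').mul_const δ).sub_const c).congr_deriv
      (by ring)
  have hcont : ContinuousOn (fun x => δ / (2 * √x)) (Set.uIcc a b) :=
    continuousOn_const.div (by fun_prop) fun x hx => by
      have := hpos x hx
      positivity
  rw [← intervalIntegral.integral_const_mul,
    ← intervalIntegral.integral_deriv_smul_comp hderiv hcont (by fun_prop)]
  refine intervalIntegral.integral_congr fun x hx => ?_
  have := hpos x hx
  simp only [Function.comp, smul_eq_mul, sub_add_cancel]
  field_simp

lemma integral_exp_neg_half_sq_sqrt_mul_sub_le {δ c a b : ℝ} (hδ : 0 < δ) (hc : 0 ≤ c)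
    (ha : 0 < a) (hab : a ≤ b) (hca : c ≤ √a * δ) :
    ∫ x in a..b, exp (-(1 / 2) * (√x * δ - c) ^ 2) ≤ 2 / δ ^ 2 + c * √(2 * π) / δ ^ 2 := by
  set g : ℝ → ℝ := fun u => (u + c) * exp (-(1 / 2) * u ^ 2)
  have hg : Integrable g := by
    simp only [g, add_mul]
    exact (integrable_mul_exp_neg_mul_sq (by norm_num)).add
      ((integrable_exp_neg_mul_sq (by norm_num)).const_mul c)
  have hle : √a * δ - c ≤ √b * δ - c := by gcongr
  rw [integral_exp_neg_half_sq_sqrt_mul_sub hδ.ne' ha (ha.trans_le hab),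
    intervalIntegral.integral_of_le hle]
  calc 2 / δ ^ 2 * ∫ u in Set.Ioc (√a * δ - c) (√b * δ - c), g u
      ≤ 2 / δ ^ 2 * ∫ u in Set.Ioi 0, g u := by
        refine mul_le_mul_of_nonneg_left (setIntegral_mono_set hg.integrableOn ?_ ?_)
          (by positivity)
        · filter_upwards [ae_restrict_mem measurableSet_Ioi] with u (hu : 0 < u)
          positivity
        · exact .of_forall fun u hu => (sub_nonneg.2 hca).trans_lt hu.1
    _ = 2 / δ ^ 2 + c * √(2 * π) / δ ^ 2 := by
        rw [integral_Ioi_add_mul_exp_neg_half_sq]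
        ring

lemma sum_Ioc_exp_neg_half_sq_sqrt_mul_sub_le {δ c : ℝ} (hδ : 0 < δ) (hc : 0 ≤ c) {N T : ℕ}
    (hN : 0 < N) (hcN : c ≤ √N * δ) :
    ∑ n ∈ Finset.Ioc N T, exp (-(1 / 2) * (√n * δ - c) ^ 2)
      ≤ 2 / δ ^ 2 + c * √(2 * π) / δ ^ 2 := by
  rcases le_total T N with hTN | hNT
  · rw [Finset.Ioc_eq_empty_of_le hTN, Finset.sum_empty]
    positivity
  have hanti : AntitoneOn (fun x => exp (-(1 / 2) * (√x * δ - c) ^ 2)) (Set.Icc N T) := by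
    intro x hx y _ hxy
    have hcx : c ≤ √x * δ := hcN.trans (by gcongr; exact hx.1)
    have hsq : (√x * δ - c) ^ 2 ≤ (√y * δ - c) ^ 2 := by gcongr
    exact exp_le_exp.2 (by linarith)
  exact (hanti.sum_Ioc_le_integral hNT).trans
    (integral_exp_neg_half_sq_sqrt_mul_sub_le hδ hc (by exact_mod_cast hN) (by exact_mod_cast hNT)
      hcN)

lemma sqrt_le_sqrt_mul_of_le_mul_sq {x y δ : ℝ} (hy : 0 ≤ y) (hδ : 0 ≤ δ) (h : x ≤ y * δ ^ 2) :
    √x ≤ √y * δ := by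
  rw [← sqrt_sq hδ, ← sqrt_mul hy]
  exact sqrt_le_sqrt h

lemma sqrt_four_div_mul_logPlus_div_le {T₁ n δ : ℝ} (hT₁ : 0 ≤ T₁) (hn : 0 < n)
    (hnδ : 1 ≤ n * δ ^ 2) :
    √(4 / n * logPlus (T₁ / n)) ≤ √(4 * logPlus (T₁ * δ ^ 2)) / √n := by
  rw [← sqrt_div' _ hn.le, div_mul_eq_mul_div]
  refine sqrt_le_sqrt (div_le_div_of_nonneg_right ?_ hn.le)
  refine mul_le_mul_of_nonneg_left (logPlus_le_logPlus (by positivity) ?_) (by norm_num)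
  rw [div_le_iff₀ hn]
  nlinarith

section SumOfSubgaussian

variable {Ω : Type*} [MeasurableSpace Ω] {μ : Measure Ω} {M : ℕ → Ω → ℝ}

lemma measure_le_sum_range_div_add_le (hindep : iIndepFun M μ)
    (hsub : ∀ i, HasSubgaussianMGF (M i) 1 μ) {n : ℕ} (hn : 0 < n) {δ b c : ℝ}
    (hb : b ≤ c / √n) (hc : c ≤ √n * δ) :
    μ {ω | δ ≤ (∑ s ∈ Finset.range n, M s ω) / n + b}
      ≤ ENNReal.ofReal (exp (-(1 / 2) * (√n * δ - c) ^ 2)) := by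
  have := hindep.isProbabilityMeasure
  have hn' : (0 : ℝ) < n := by exact_mod_cast hn
  have hsqrt : 0 < √(n : ℝ) := sqrt_pos.2 hn'
  have hsq : √(n : ℝ) * √n = n := mul_self_sqrt hn'.le
  set ε := √n * (√n * δ - c) with hε_def
  have hε : 0 ≤ ε := mul_nonneg hsqrt.le (sub_nonneg.2 hc)
  have hsubset : {ω | δ ≤ (∑ s ∈ Finset.range n, M s ω) / n + b}
      ⊆ {ω | ε ≤ ∑ s ∈ Finset.range n, M s ω} := by
    intro ω (hω : δ ≤ _)
    have havg : δ - c / √n ≤ (∑ s ∈ Finset.range n, M s ω) / n := by linarith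
    rw [le_div_iff₀ hn'] at havg
    calc ε = (δ - c / √n) * n := by
          have hinv : √(n : ℝ) * (√n)⁻¹ = 1 := mul_inv_cancel₀ hsqrt.ne'
          rw [hε_def, div_eq_mul_inv]
          linear_combination (δ - c * (√n)⁻¹) * hsq + c * √n * hinv
      _ ≤ _ := havg
  calc μ {ω | δ ≤ (∑ s ∈ Finset.range n, M s ω) / n + b}
      ≤ μ {ω | ε ≤ ∑ s ∈ Finset.range n, M s ω} := measure_mono hsubset
    _ = ENNReal.ofReal (μ.real {ω | ε ≤ ∑ s ∈ Finset.range n, M s ω}) :=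
        (ofReal_measureReal (measure_ne_top _ _)).symm
    _ ≤ ENNReal.ofReal (exp (-ε ^ 2 / (2 * n * (1 : NNReal)))) :=
        ENNReal.ofReal_le_ofReal
          (HasSubgaussianMGF.measure_sum_range_ge_le_of_iIndepFun hindep (fun i _ => hsub i) hε)
    _ = ENNReal.ofReal (exp (-(1 / 2) * (√n * δ - c) ^ 2)) := by
        rw [NNReal.coe_one, hε_def, mul_pow, sq_sqrt hn'.le]
        congr 2
        field_simp

lemma measure_le_mean_add_sqrt_logPlus_le (hindep : iIndepFun M μ)
    (hsub : ∀ i, HasSubgaussianMGF (M i) 1 μ) {T₁ δ : ℝ} (hT₁ : 0 ≤ T₁) (hδ : 0 < δ) {n : ℕ}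
    (hn : 0 < n) (hnδ : 4 * logPlus (T₁ * δ ^ 2) + 1 ≤ n * δ ^ 2) :
    μ {ω | δ ≤ (∑ s ∈ Finset.range n, M s ω) / n + √((4 / n) * logPlus (T₁ / n))}
      ≤ ENNReal.ofReal (exp (-(1 / 2) * (√n * δ - √(4 * logPlus (T₁ * δ ^ 2))) ^ 2)) := by
  have hL := logPlus_nonneg (T₁ * δ ^ 2)
  exact measure_le_sum_range_div_add_le hindep hsub hn
    (sqrt_four_div_mul_logPlus_div_le hT₁ (by exact_mod_cast hn) (by linarith))
    (sqrt_le_sqrt_mul_of_le_mul_sq (Nat.cast_nonneg n) hδ.le (by linarith))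

lemma sum_Ioc_measure_le_mean_add_sqrt_logPlus_le (hindep : iIndepFun M μ)
    (hsub : ∀ i, HasSubgaussianMGF (M i) 1 μ) {T₁ δ : ℝ} (hT₁ : 0 ≤ T₁) (hδ : 0 < δ)
    {N T : ℕ} (hN : 0 < N) (hNδ : 4 * logPlus (T₁ * δ ^ 2) + 1 ≤ N * δ ^ 2) :
    ∑ n ∈ Finset.Ioc N T,
        μ {ω | δ ≤ (∑ s ∈ Finset.range n, M s ω) / n + √((4 / n) * logPlus (T₁ / n))}
      ≤ ENNReal.ofReal (2 / δ ^ 2 + √(4 * logPlus (T₁ * δ ^ 2)) * √(2 * π) / δ ^ 2) := by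
  set c := √(4 * logPlus (T₁ * δ ^ 2))
  calc _ ≤ ∑ n ∈ Finset.Ioc N T, ENNReal.ofReal (exp (-(1 / 2) * (√n * δ - c) ^ 2)) :=
        Finset.sum_le_sum fun n hn =>
          have hNn : N < n := (Finset.mem_Ioc.1 hn).1
          measure_le_mean_add_sqrt_logPlus_le hindep hsub hT₁ hδ (hN.trans hNn)
            (hNδ.trans (by gcongr))
    _ = ENNReal.ofReal (∑ n ∈ Finset.Ioc N T, exp (-(1 / 2) * (√n * δ - c) ^ 2)) :=
        (ENNReal.ofReal_sum_of_nonneg fun n _ => (exp_pos _).le).symm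
    _ ≤ _ := by
        refine ENNReal.ofReal_le_ofReal
          (sum_Ioc_exp_neg_half_sq_sqrt_mul_sub_le hδ (sqrt_nonneg _) hN ?_)
        have := logPlus_nonneg (T₁ * δ ^ 2)
        exact sqrt_le_sqrt_mul_of_le_mul_sq (Nat.cast_nonneg N) hδ.le (by linarith)

end SumOfSubgaussian

theorem stmt2_general {Ω : Type*} [MeasurableSpace Ω] (μ : Measure Ω) [IsProbabilityMeasure μ]
    (M : ℕ → Ω → ℝ)
    (hindep : iIndepFun M μ)
    (hsub : ∀ i, IsOneSubgaussian μ (M i))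
    (hmean : ∀ i, (∫ ω, M i ω ∂μ) = 0)
    (δ : ℝ) (hδ : 0 < δ)
    (T T₁ : ℕ) :
    (∑ n ∈ Finset.Icc 1 T,
        μ {ω | δ ≤ (∑ s ∈ Finset.range n, M s ω) / n
            + Real.sqrt ((4 / n) * logPlus ((T₁ : ℝ) / n))}) ≤
      ENNReal.ofReal (1 + 4 * logPlus (T₁ * δ ^ 2) / δ ^ 2 + 3 / δ ^ 2
        + Real.sqrt (8 * Real.pi * logPlus (T₁ * δ ^ 2)) / δ ^ 2) := by
  set L := logPlus (T₁ * δ ^ 2)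
  have hL : 0 ≤ L := logPlus_nonneg _
  set p : ℕ → ℝ≥0∞ := fun n => μ {ω | δ ≤ (∑ s ∈ Finset.range n, M s ω) / n
      + √((4 / n) * logPlus ((T₁ : ℝ) / n))}
  set N := ⌈(4 * L + 1) / δ ^ 2⌉₊
  have hN : (N : ℝ) < (4 * L + 1) / δ ^ 2 + 1 := Nat.ceil_lt_add_one (by positivity)
  have hhead : ∑ n ∈ Finset.Ioc 0 N, p n ≤ N := by
    simpa using Finset.sum_le_card_nsmul (Finset.Ioc 0 N) p 1 fun n _ => prob_le_one
  have htail := sum_Ioc_measure_le_mean_add_sqrt_logPlus_le (T := max N T) hindep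
    (fun i => (hsub i).hasSubgaussianMGF (hmean i)) (Nat.cast_nonneg T₁) hδ
    (Nat.ceil_pos.2 (by positivity)) ((div_le_iff₀ (by positivity)).1 (Nat.le_ceil _))
  have hsqrt : √(8 * π * L) = √(4 * L) * √(2 * π) := by
    rw [← sqrt_mul (by positivity)]
    ring_nf
  calc ∑ n ∈ Finset.Icc 1 T, p n
      ≤ ∑ n ∈ Finset.Ioc 0 (max N T), p n :=
        Finset.sum_le_sum_of_subset fun n hn => by
          simp only [Finset.mem_Icc, Finset.mem_Ioc] at hn ⊢
          omega
    _ = ∑ n ∈ Finset.Ioc 0 N, p n + ∑ n ∈ Finset.Ioc N (max N T), p n :=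
        (Finset.sum_Ioc_consecutive _ (Nat.zero_le N) (le_max_left N T)).symm
    _ ≤ ENNReal.ofReal N + ENNReal.ofReal (2 / δ ^ 2 + √(4 * L) * √(2 * π) / δ ^ 2) := by
        rw [ENNReal.ofReal_natCast]
        exact add_le_add hhead htail
    _ ≤ _ := by
        rw [← ENNReal.ofReal_add (Nat.cast_nonneg N) (by positivity), hsqrt]
        refine ENNReal.ofReal_le_ofReal ?_
        have : (4 * L + 1) / δ ^ 2 + 2 / δ ^ 2 = 4 * L / δ ^ 2 + 3 / δ ^ 2 := by ring
        linarith

/-- Let `δ > 0`, `M₁, M₂, …` independent 1-subgaussian with zero means and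
`μ̂ₙ = (1/n)·∑_{s=1}^n M_s`.  For positive integers `T₁ ≤ T`,
`∑_{n=1}^T P(μ̂ₙ + √((4/n)·log⁺(T₁/n)) ≥ δ)
  ≤ 1 + 4·log⁺(T₁δ²)/δ² + 3/δ² + √(8π·log⁺(T₁δ²))/δ²`. -/
theorem stmt2 {Ω : Type*} [MeasurableSpace Ω] (μ : Measure Ω) [IsProbabilityMeasure μ]
    (M : ℕ → Ω → ℝ) (hmeas : ∀ i, Measurable (M i))
    (hindep : iIndepFun M μ)
    (hsub : ∀ i, IsOneSubgaussian μ (M i))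
    (hmean : ∀ i, (∫ ω, M i ω ∂μ) = 0)
    (δ : ℝ) (hδ : 0 < δ)
    (T T₁ : ℕ) (hT₁ : 0 < T₁) (hT₁T : T₁ ≤ T) :
    (∑ n ∈ Finset.Icc 1 T,
        μ {ω | δ ≤ (∑ s ∈ Finset.range n, M s ω) / n
            + Real.sqrt ((4 / n) * logPlus ((T₁ : ℝ) / n))}) ≤
      ENNReal.ofReal (1 + 4 * logPlus (T₁ * δ ^ 2) / δ ^ 2 + 3 / δ ^ 2
        + Real.sqrt (8 * Real.pi * logPlus (T₁ * δ ^ 2)) / δ ^ 2) :=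
  stmt2_general μ M hindep hsub hmean δ hδ T T₁
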